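/- For every positive integer m, setting r = 2^m + 1, every semigroup S with at least 2 elements in which x^r = x for every x ∈ S has a subsemigroup of order exactly 2. -/
import Mathlib


/-- `spow a n` is the `(n+1)`-st power of `a` in a semigroup:
`spow a 0 = a` and `spow a (n+1) = spow a n * a`, so `spow a (r-1) = a^r`. -/
def spow {S : Type*} [Semigroup S] (a : S) : ℕ → S
  | 0 => a
  | n + 1 => spow a n * a

theorem spow_add {S : Type*} [Semigroup S] (a : S) (i j : ℕ) :
    spow a i * spow a j = spow a (i + j + 1) := by
  induction j with
  | zero => rfl
  | succ j ih =>
    show spow a i * (spow a j * a) = _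
    rw [← mul_assoc, ih]
    rfl

/-- iterated squaring -/
def gpow {S : Type*} [Semigroup S] (a : S) : ℕ → S
  | 0 => a
  | j + 1 => gpow a j * gpow a j

theorem gpow_eq_spow {S : Type*} [Semigroup S] (a : S) (j : ℕ) :
    gpow a j = spow a (2 ^ j - 1) := by
  induction j with
  | zero => rfl
  | succ j ih =>
    have h1 : (1 : ℕ) ≤ 2 ^ j := Nat.one_le_two_pow
    have harith : (2 ^ j - 1) + (2 ^ j - 1) + 1 = 2 ^ (j + 1) - 1 := by
      have : 2 ^ (j + 1) = 2 * 2 ^ j := by ring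
      omega
    show gpow a j * gpow a j = _
    rw [ih, spow_add, harith]

/-- helper: a 2-element closed pair gives the conclusion -/
theorem pair_subsemigroup {S : Type*} [Semigroup S] (u v : S) (huv : u ≠ v)
    (h1 : u * u = u ∨ u * u = v) (h2 : u * v = u ∨ u * v = v)
    (h3 : v * u = u ∨ v * u = v) (h4 : v * v = u ∨ v * v = v) :
    ∃ T : Finset S, T.card = 2 ∧ ∀ x ∈ T, ∀ y ∈ T, x * y ∈ T := by
  classical
  refine ⟨{u, v}, Finset.card_pair huv, ?_⟩
  intro x hx y hy
  simp only [Finset.mem_insert, Finset.mem_singleton] at *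
  rcases hx with rfl | rfl <;> rcases hy with rfl | rfl <;> tauto

/-- key lemma: an element with `b² ≠ b` and `b⁴ = b²` yields a subsemigroup of order 2 -/
theorem key {S : Type*} [Semigroup S] (b : S) (hne : b * b ≠ b)
    (hid : (b * b) * (b * b) = b * b) :
    ∃ T : Finset S, T.card = 2 ∧ ∀ x ∈ T, ∀ y ∈ T, x * y ∈ T := by
  have k4 : b * (b * (b * b)) = b * b := by simpa [mul_assoc] using hid
  by_cases h3 : b * (b * b) = b * b
  · refine pair_subsemigroup b (b * b) (Ne.symm hne) (Or.inr rfl) (Or.inr h3) ?_ ?_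
    · exact Or.inr (by rw [mul_assoc]; exact h3)
    · exact Or.inr hid
  · refine pair_subsemigroup (b * b) (b * (b * b)) (Ne.symm h3) (Or.inl hid) ?_ ?_ ?_
    · exact Or.inr (by simp [mul_assoc, k4])
    · exact Or.inr (by simp [mul_assoc, k4])
    · exact Or.inl (by simp [mul_assoc, k4])

theorem descent {S : Type*} [Semigroup S] (a : S) (h0 : a * a ≠ a) :
    ∀ k, gpow a (k + 1) = gpow a k →
      ∃ b : S, b * b ≠ b ∧ (b * b) * (b * b) = b * b := by
  intro k
  induction k with
  | zero => intro h; exact absurd h h0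
  | succ k ih =>
    intro h
    by_cases hk : gpow a (k + 1) = gpow a k
    · exact ih hk
    · refine ⟨gpow a k, hk, ?_⟩
      exact h

/-- For `r = 2^m + 1` (`m ≥ 1`), every semigroup with at least 2 elements in
which `x^r = x` for every `x` has a subsemigroup of order exactly 2. -/
theorem stmt_17 (m : ℕ) (hm : 0 < m) (S : Type*) [Semigroup S]
    (hpow : ∀ x : S, spow x (2 ^ m) = x)
    (hcard : ∃ x y : S, x ≠ y) :
    ∃ T : Finset S, T.card = 2 ∧ ∀ x ∈ T, ∀ y ∈ T, x * y ∈ T := by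
  classical
  by_cases hband : ∀ x : S, x * x = x
  · -- band case
    obtain ⟨x, y, hxy⟩ := hcard
    have l1 : ∀ u : S, u * u = u := hband
    have l2 : ∀ u v : S, u * (u * v) = u * v := by
      intro u v; rw [← mul_assoc, l1]
    have l4 : ∀ u v w : S, u * (v * (u * (v * w))) = u * (v * w) := by
      intro u v w
      have := congrArg (· * w) (l1 (u * v))
      simpa [mul_assoc] using this
    by_cases h1 : x * (y * x) = x
    · by_cases h2 : y * (x * y) = y
      · by_cases h3 : x * y = x
        · by_cases h4 : y * x = y
          · exact pair_subsemigroup x y hxy (Or.inl (l1 x)) (Or.inl h3) (Or.inr h4)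
              (Or.inr (l1 y))
          · refine pair_subsemigroup y (y * x) (Ne.symm h4) (Or.inl (l1 y)) ?_ ?_ ?_
            · exact Or.inr (l2 y x)
            · exact Or.inl (by rw [mul_assoc]; exact h2)
            · exact Or.inr (l1 (y * x))
        · refine pair_subsemigroup x (x * y) (Ne.symm h3) (Or.inl (l1 x)) ?_ ?_ ?_
          · exact Or.inr (l2 x y)
          · exact Or.inl (by rw [mul_assoc]; exact h1)
          · exact Or.inr (l1 (x * y))
      · refine pair_subsemigroup y (y * (x * y)) (Ne.symm h2) (Or.inl (l1 y)) ?_ ?_ ?_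
        · exact Or.inr (l2 y (x * y))
        · exact Or.inr (by simp [mul_assoc, l1, l2, l4])
        · exact Or.inr (by simp [mul_assoc, l1, l2, l4])
    · refine pair_subsemigroup x (x * (y * x)) (Ne.symm h1) (Or.inl (l1 x)) ?_ ?_ ?_
      · exact Or.inr (l2 x (y * x))
      · exact Or.inr (by simp [mul_assoc, l1, l2, l4])
      · exact Or.inr (by simp [mul_assoc, l1, l2, l4])
  · -- non-band case
    push_neg at hband
    obtain ⟨a, ha⟩ := hband
    have h2m : (2 : ℕ) ≤ 2 ^ m := by
      calc (2 : ℕ) = 2 ^ 1 := by norm_num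
        _ ≤ 2 ^ m := Nat.pow_le_pow_right (by norm_num) hm
    have hstep : gpow a (m + 1) = gpow a m := by
      rw [gpow_eq_spow, gpow_eq_spow]
      have hp : (2 : ℕ) ^ (m + 1) = 2 * 2 ^ m := by ring
      have e1 : 2 ^ (m + 1) - 1 = 2 ^ m + (2 ^ m - 2) + 1 := by omega
      have e2 : 2 ^ m - 2 + 1 = 2 ^ m - 1 := by omega
      rw [e1, ← spow_add, hpow a]
      have : a * spow a (2 ^ m - 2) = spow a 0 * spow a (2 ^ m - 2) := rfl
      rw [this, spow_add]
      congr 1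
      omega
    obtain ⟨b, hb1, hb2⟩ := descent a ha m hstep
    exact key b hb1 hb2
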